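/- arXiv:1501.00223 — 5 statements merged into one kernel-verified Lean document; each statement's English description precedes it below -/
import Mathlib

section
/- Let L and M be fields and ξ transcendental over L such that L ⊊ M ⊆ L(ξ). Then M = L(η) for some η ∈ L(ξ). (Lüroth's Theorem) -/
open IntermediateField

theorem exists_eq_adjoin_apply_of_le_fieldRange {K F : Type*} [Field K] [Field F] [Algebra K F]
    (φ : RatFunc K →ₐ[K] F) {M : IntermediateField K F} (hM : M ≤ φ.fieldRange) :
    ∃ g, M = K⟮φ g⟯ := by
  let E := M.comap φ
  refine ⟨RatFunc.Luroth.generator E, ?_⟩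
  calc M = E.map φ := (map_comap_eq_self hM).symm
    _ = (K⟮RatFunc.Luroth.generator E⟯).map φ := by rw [← RatFunc.Luroth.eq_adjoin_generator]
    _ = K⟮φ (RatFunc.Luroth.generator E)⟯ := by rw [adjoin_map, Set.image_singleton]

theorem fieldRange_val_comp_algEquivOfTranscendental {K F : Type*} [Field K] [Field F]
    [Algebra K F] (ξ : F) (hξ : Transcendental K ξ) :
    (K⟮ξ⟯.val.comp (RatFunc.algEquivOfTranscendental ξ hξ).toAlgHom).fieldRange = K⟮ξ⟯ :=
  SetLike.coe_injective <| by simp [Set.range_comp]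

theorem luroth_general {L F : Type} [Field L] [Field F] [Algebra L F]
    (ξ : F) (hξ : Transcendental L ξ)
    (M : IntermediateField L F)
    (hM2 : M ≤ IntermediateField.adjoin L {ξ}) :
    ∃ η ∈ IntermediateField.adjoin L {ξ}, M = IntermediateField.adjoin L {η} := by
  have hrange := fieldRange_val_comp_algEquivOfTranscendental ξ hξ
  obtain ⟨g, rfl⟩ := exists_eq_adjoin_apply_of_le_fieldRange _ (hrange ▸ hM2)
  exact ⟨_, hrange.le ⟨g, rfl⟩, rfl⟩

/-- **Lüroth's Theorem.** If `ξ` is transcendental over `L` and `M` is an intermediate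
field with `L ⊊ M ⊆ L(ξ)`, then `M = L(η)` for some `η ∈ L(ξ)`. -/
theorem luroth {L F : Type} [Field L] [Field F] [Algebra L F]
    (ξ : F) (hξ : Transcendental L ξ)
    (M : IntermediateField L F) (hM1 : ⊥ < M)
    (hM2 : M ≤ IntermediateField.adjoin L {ξ}) :
    ∃ η ∈ IntermediateField.adjoin L {ξ}, M = IntermediateField.adjoin L {η} :=
  luroth_general ξ hξ M hM2
end

section
/- Let X, Y, Z be affine varieties over an algebraically closed field K, and let f : X → Y, g : Y → Z be regular dominant maps. Then the set S_g of points at which g is not proper is contained in S_{g∘f}. -/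
open MvPolynomial Set Filter

variable {K : Type} [Field K]

/-- An algebraic (Zariski-closed) subset of `K^m`. -/
def IsAlgSet {m : ℕ} (V : Set (Fin m → K)) : Prop :=
  ∃ S : Set (MvPolynomial (Fin m) K), V = {x | ∀ p ∈ S, eval x p = 0}

/-- The Zariski closure of a subset of `K^m`. -/
def zclosure {m : ℕ} (A : Set (Fin m → K)) : Set (Fin m → K) :=
  ⋂₀ {V | IsAlgSet V ∧ A ⊆ V}

/-- A map `K^n → K^m` given coordinatewise by polynomials. -/
def IsPolyMap {n m : ℕ} (F : (Fin n → K) → (Fin m → K)) : Prop :=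
  ∃ p : Fin m → MvPolynomial (Fin n) K, ∀ x j, F x j = eval x (p j)

/-- The ring of regular (polynomial) functions on a subset `X ⊆ K^n`,
as a subalgebra of all functions `X → K`. -/
noncomputable def coordRing {n : ℕ} (X : Set (Fin n → K)) : Subalgebra K (X → K) :=
  (MvPolynomial.aeval (fun i => (fun x : X => (x : Fin n → K) i)) :
    MvPolynomial (Fin n) K →ₐ[K] (X → K)).range

/-- The pullback homomorphism on regular functions induced by a map `f : X → Y`. -/
noncomputable def pullback {n m : ℕ} {X : Set (Fin n → K)} {Y : Set (Fin m → K)}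
    (f : X → Y) : coordRing Y →+* (X → K) :=
  (Pi.ringHom (fun x : X => Pi.evalRingHom (fun _ : Y => K) (f x))).comp
    ((coordRing Y).subtype)

/-- `f : X → Y` is a finite map if every regular function on `X` is integral over
the pullback of the ring of regular functions on `Y`. -/
def IsFiniteMap {n m : ℕ} {X : Set (Fin n → K)} {Y : Set (Fin m → K)} (f : X → Y) : Prop :=
  ∀ g ∈ coordRing X, (pullback f).IsIntegralElem g

/-- `F` (mapping `X` into `Y`) is proper at `y`: there is a Zariski-open neighbourhood `U`
of `y` such that the restriction `X ∩ F⁻¹(U) → Y ∩ U` is a finite map. -/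
def ProperAt {n m : ℕ} (X : Set (Fin n → K)) (Y : Set (Fin m → K))
    (F : (Fin n → K) → (Fin m → K)) (y : Fin m → K) : Prop :=
  ∃ U : Set (Fin m → K), IsAlgSet Uᶜ ∧ y ∈ U ∧
    ∃ h : Set.MapsTo F (X ∩ F ⁻¹' U) (Y ∩ U),
      IsFiniteMap (Set.MapsTo.restrict F _ _ h)

/-- The set `S_F` of points of the closure of the image at which `F` is not proper. -/
def NotProperSet {n m : ℕ} (X : Set (Fin n → K)) (Y : Set (Fin m → K))
    (F : (Fin n → K) → (Fin m → K)) : Set (Fin m → K) :=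
  {y ∈ zclosure (F '' X) | ¬ ProperAt X Y F y}

/-- `F` restricted to `X` is generically finite: on a nonempty Zariski-open subset
meeting the image, all fibers are finite. -/
def GenericallyFinite {n m : ℕ} (X : Set (Fin n → K))
    (F : (Fin n → K) → (Fin m → K)) : Prop :=
  ∃ U : Set (Fin m → K), IsAlgSet Uᶜ ∧ (U ∩ F '' X).Nonempty ∧
    ∀ y ∈ U, (X ∩ F ⁻¹' {y}).Finite

/-- An irreducible algebraic subset of `K^m`. -/
def IrredAlgSet {m : ℕ} (X : Set (Fin m → K)) : Prop :=
  IsAlgSet X ∧ X.Nonempty ∧ ∀ V W : Set (Fin m → K), IsAlgSet V → IsAlgSet W →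
    X ⊆ V ∪ W → X ⊆ V ∨ X ⊆ W

/-- The dimension of a subset of `K^m`: the supremum of lengths of strictly increasing
chains of irreducible algebraic subsets contained in it. -/
noncomputable def algDim {m : ℕ} (X : Set (Fin m → K)) : ℕ∞ :=
  ⨆ d ∈ {d : ℕ | ∃ c : Fin (d + 1) → Set (Fin m → K),
    StrictMono c ∧ ∀ i, IrredAlgSet (c i) ∧ c i ⊆ X}, (d : ℕ∞)

/-- Through `x` passes a parametric curve of degree at most `d` contained in `S`. -/
def HasParamCurveThrough {m : ℕ} (S : Set (Fin m → K)) (d : ℕ) (x : Fin m → K) : Prop :=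
  ∃ φ : Fin m → Polynomial K,
    (∀ j, (φ j).natDegree ≤ d) ∧ (∃ j, 0 < (φ j).natDegree) ∧
    (∀ t : K, (fun j => (φ j).eval t) ∈ S) ∧ ∃ t₀ : K, (fun j => (φ j).eval t₀) = x

/-!
Suppose `g ∘ f` is finite over an open `U ∋ z`. A regular function `h` on `g⁻¹(U)` then has
`f^* h` integral over `K[U]`, say `P(f^* h) = 0` with `P` monic, so `f^* (P(h)) = 0`. Since `f`
has Zariski-dense image, so does its restriction to `(g ∘ f)⁻¹(U) → g⁻¹(U)` (`U` is open), hence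
`f^*` is injective there and `P(h) = 0`: `g` is finite over `U` as well. Dominance of `f` also
puts `z` into the closure of the image of `g ∘ f`.
-/

section ZariskiClosure

variable {m : ℕ}

lemma subset_zclosure (A : Set (Fin m → K)) : A ⊆ zclosure A :=
  fun _ ha => mem_sInter.2 fun _ hV => hV.2 ha

lemma zclosure_subset {A V : Set (Fin m → K)} (hV : IsAlgSet V) (hAV : A ⊆ V) :
    zclosure A ⊆ V :=
  sInter_subset_of_mem ⟨hV, hAV⟩

lemma zclosure_mono {A B : Set (Fin m → K)} (h : A ⊆ B) : zclosure A ⊆ zclosure B :=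
  fun _ hx => mem_sInter.2 fun _ hV => mem_sInter.1 hx _ ⟨hV.1, h.trans hV.2⟩

lemma isAlgSet_zeroLocus (S : Set (MvPolynomial (Fin m) K)) :
    IsAlgSet {x : Fin m → K | ∀ p ∈ S, eval x p = 0} :=
  ⟨S, rfl⟩

lemma isAlgSet_zclosure (A : Set (Fin m → K)) : IsAlgSet (zclosure A) := by
  refine ⟨{p | ∀ a ∈ A, eval a p = 0}, Subset.antisymm ?_ ?_⟩
  · exact zclosure_subset (isAlgSet_zeroLocus _) fun a ha p hp => hp a ha
  · rintro x hx V ⟨⟨T, rfl⟩, hAV⟩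
    exact fun p hp => hx p fun a ha => hAV ha p hp

lemma eval_eq_zero_of_mem_zclosure {A : Set (Fin m → K)} {r : MvPolynomial (Fin m) K}
    (h : ∀ a ∈ A, eval a r = 0) {y : Fin m → K} (hy : y ∈ zclosure A) : eval y r = 0 :=
  zclosure_subset (isAlgSet_zeroLocus {r}) (fun a ha _ hp => hp ▸ h a ha) hy r rfl

/-- If `r` vanishes on `A ∩ W`, then `r * s` vanishes on `A` for every equation `s` of `Wᶜ`. -/
lemma inter_subset_zclosure_inter {A Y W : Set (Fin m → K)} (hW : IsAlgSet Wᶜ)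
    (hY : Y ⊆ zclosure A) : Y ∩ W ⊆ zclosure (A ∩ W) := by
  obtain ⟨S, hS⟩ := hW
  rintro y ⟨hyY, hyW⟩ V ⟨⟨T, rfl⟩, hAV⟩ r hr
  obtain ⟨s, hsS, hsy⟩ : ∃ s ∈ S, eval y s ≠ 0 := by
    by_contra! h
    exact (hS ▸ h : y ∈ Wᶜ) hyW
  have hrs : ∀ a ∈ A, eval a (r * s) = 0 := by
    intro a ha
    by_cases haW : a ∈ W
    · simp [hAV ⟨ha, haW⟩ r hr]
    · simp [(hS ▸ haW : a ∈ {x | ∀ p ∈ S, eval x p = 0}) s hsS]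
  simpa [hsy] using eval_eq_zero_of_mem_zclosure hrs (hY hyY)

end ZariskiClosure

section PolyMap

variable {n m : ℕ} {F : (Fin n → K) → (Fin m → K)}

lemma IsPolyMap.exists_eval_comp (hF : IsPolyMap F) (s : MvPolynomial (Fin m) K) :
    ∃ t : MvPolynomial (Fin n) K, ∀ x, eval (F x) s = eval x t := by
  obtain ⟨p, hp⟩ := hF
  refine ⟨aeval p s, fun x => ?_⟩
  rw [show F x = fun j => eval x (p j) from funext (hp x), ← aeval_eq_eval, ← aeval_eq_eval,
    comp_aeval_apply]

lemma IsPolyMap.isAlgSet_preimage (hF : IsPolyMap F) {V : Set (Fin m → K)} (hV : IsAlgSet V) :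
    IsAlgSet (F ⁻¹' V) := by
  obtain ⟨S, rfl⟩ := hV
  choose t ht using hF.exists_eval_comp
  refine ⟨t '' S, ext fun x => ?_⟩
  simp [ht]

lemma IsPolyMap.image_zclosure_subset (hF : IsPolyMap F) (A : Set (Fin n → K)) :
    F '' zclosure A ⊆ zclosure (F '' A) :=
  image_subset_iff.2 <| zclosure_subset (hF.isAlgSet_preimage (isAlgSet_zclosure _))
    (image_subset_iff.1 (subset_zclosure _))

lemma IsPolyMap.zclosure_image_mono (hF : IsPolyMap F) {A B : Set (Fin n → K)}
    (h : B ⊆ zclosure A) : zclosure (F '' B) ⊆ zclosure (F '' A) :=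
  zclosure_subset (isAlgSet_zclosure _) ((image_mono h).trans (hF.image_zclosure_subset A))

end PolyMap

section CoordRing

variable {n m l : ℕ} {X : Set (Fin n → K)} {Y : Set (Fin m → K)} {Z : Set (Fin l → K)}

lemma mem_coordRing_iff {g : X → K} :
    g ∈ coordRing X ↔ ∃ q : MvPolynomial (Fin n) K, ∀ x : X, g x = eval (x : Fin n → K) q := by
  have key (q : MvPolynomial (Fin n) K) (x : X) :
      aeval (fun i (y : X) => (y : Fin n → K) i) q x = eval (x : Fin n → K) q := by
    have h := comp_aeval_apply (f := fun i (y : X) => (y : Fin n → K) i)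
      (Pi.evalAlgHom K (fun _ : X => K) x) q
    simpa [← aeval_eq_eval] using h
  constructor
  · rintro ⟨q, rfl⟩
    exact ⟨q, key q⟩
  · rintro ⟨q, hq⟩
    refine ⟨q, funext fun x => ?_⟩
    have := key q x
    exact this.trans (hq x).symm

lemma IsPolyMap.comp_mem_coordRing {F : (Fin n → K) → (Fin m → K)} (hF : IsPolyMap F)
    {f : X → Y} (hf : ∀ x, (f x : Fin m → K) = F x) {h : Y → K} (hh : h ∈ coordRing Y) :
    h ∘ f ∈ coordRing X := by
  obtain ⟨q, hq⟩ := mem_coordRing_iff.1 hh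
  obtain ⟨t, ht⟩ := hF.exists_eval_comp q
  exact mem_coordRing_iff.2 ⟨t, fun x => by simp [hq, hf, ht]⟩

lemma eq_zero_of_comp_eq_zero {f : X → Y}
    (hdense : Y ⊆ zclosure (range fun x => (f x : Fin m → K))) {q : Y → K}
    (hq : q ∈ coordRing Y) (hqf : q ∘ f = 0) : q = 0 := by
  obtain ⟨r, hr⟩ := mem_coordRing_iff.1 hq
  funext y
  refine (hr y).trans (eval_eq_zero_of_mem_zclosure ?_ (hdense y.2))
  rintro _ ⟨x, rfl⟩
  rw [← hr]
  exact congrFun hqf x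

lemma IsFiniteMap.of_comp {f : X → Y} {g : Y → Z}
    (hf : ∀ h ∈ coordRing Y, h ∘ f ∈ coordRing X)
    (hg : ∀ c ∈ coordRing Z, c ∘ g ∈ coordRing Y)
    (hinj : ∀ q ∈ coordRing Y, q ∘ f = 0 → q = 0)
    (hfin : IsFiniteMap (g ∘ f)) : IsFiniteMap g := by
  intro h hh
  let p : coordRing Z →+* coordRing Y := (pullback g).codRestrict _ fun c => hg c c.2
  have hpinj : Function.Injective (pullback f) :=
    (injective_iff_map_eq_zero _).2 fun q hq => Subtype.ext (hinj q q.2 hq)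
  have hcomp : (pullback f).comp p = pullback (g ∘ f) := RingHom.ext fun _ => rfl
  have hint : p.IsIntegralElem ⟨h, hh⟩ :=
    .of_map hpinj (hcomp ▸ hfin _ (hf h hh))
  exact hint.map (coordRing Y).val.toRingHom

end CoordRing

theorem notProperSet_comp_subset_general {n m l : ℕ}
    {X : Set (Fin n → K)} {Y : Set (Fin m → K)} {Z : Set (Fin l → K)}
    {F : (Fin n → K) → (Fin m → K)} {G : (Fin m → K) → (Fin l → K)}
    (hFp : IsPolyMap F) (hGp : IsPolyMap G)
    (hF : Set.MapsTo F X Y) (hG : Set.MapsTo G Y Z)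
    (hFdom : Y ⊆ zclosure (F '' X)) :
    NotProperSet Y Z G ⊆ NotProperSet X Z (G ∘ F) := by
  rintro z ⟨hz, hnot⟩
  refine ⟨?_, fun ⟨U, hUc, hzU, _, hfin⟩ => hnot ⟨U, hUc, hzU, fun y hy => ⟨hG hy.1, hy.2⟩, ?_⟩⟩
  · rw [image_comp]
    exact hGp.zclosure_image_mono hFdom hz
  let f : ↥(X ∩ (G ∘ F) ⁻¹' U) → ↥(Y ∩ G ⁻¹' U) := fun x => ⟨F x, hF x.2.1, x.2.2⟩
  have hdense : Y ∩ G ⁻¹' U ⊆ zclosure (range fun x => (f x : Fin m → K)) := by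
    refine (inter_subset_zclosure_inter (hGp.isAlgSet_preimage hUc) hFdom).trans
      (zclosure_mono ?_)
    rintro _ ⟨⟨x, hx, rfl⟩, hxU⟩
    exact ⟨⟨x, hx, hxU⟩, rfl⟩
  exact IsFiniteMap.of_comp (fun _ => hFp.comp_mem_coordRing fun _ => rfl)
    (fun _ => hGp.comp_mem_coordRing fun _ => rfl) (fun _ => eq_zero_of_comp_eq_zero hdense) hfin

/-- For regular dominant maps `f : X → Y` and `g : Y → Z` of affine varieties,
the non-properness set of `g` is contained in that of `g ∘ f`. -/
theorem notProperSet_comp_subset [IsAlgClosed K] {n m l : ℕ}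
    {X : Set (Fin n → K)} {Y : Set (Fin m → K)} {Z : Set (Fin l → K)}
    (hX : IsAlgSet X) (hY : IsAlgSet Y) (hZ : IsAlgSet Z)
    {F : (Fin n → K) → (Fin m → K)} {G : (Fin m → K) → (Fin l → K)}
    (hFp : IsPolyMap F) (hGp : IsPolyMap G)
    (hF : Set.MapsTo F X Y) (hG : Set.MapsTo G Y Z)
    (hFdom : Y ⊆ zclosure (F '' X)) (hGdom : Z ⊆ zclosure (G '' Y)) :
    NotProperSet Y Z G ⊆ NotProperSet X Z (G ∘ F) :=
  notProperSet_comp_subset_general hFp hGp hF hG hFdom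
end

section
/- Let X ⊂ K^n be a hypersurface of degree d < n over an algebraically closed field K. Then through every point of X there passes an affine line entirely contained in X; in particular the degree of K-uniruledness of X is one. -/
open MvPolynomial Set Filter

variable {K : Type} [Field K]

/-! Move `x` to the origin and split `q(y) = p(x + y)` into homogeneous parts
`q₀ + q₁ + ⋯ + q_d`, where `q₀ = p(x) = 0`. Since `p(x + t v) = ∑ tʲ qⱼ(v)`, any common zero
`v ≠ 0` of `q₁, …, q_d` spans a line through `x` inside the hypersurface. Such a `v` exists because
there are only `d < n` of them and they all vanish at `0`: by Krull's height theorem a minimal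
prime over them inside the maximal ideal of `0` has height `≤ d < n`, so it is strictly smaller,
and by the Nullstellensatz its zero locus is not just the origin. -/

namespace MvPolynomial

section Translate

variable {σ R : Type*} [CommRing R]

noncomputable def translate (x : σ → R) : MvPolynomial σ R ≃ₐ[R] MvPolynomial σ R :=
  AlgEquiv.ofAlgHom (aeval fun i => C (x i) + X i) (aeval fun i => X i - C (x i))
    (algHom_ext fun i => by simp) (algHom_ext fun i => by simp)

lemma translate_apply (x : σ → R) (p : MvPolynomial σ R) :
    translate x p = aeval (fun i => C (x i) + X i) p := rfl

@[simp]
lemma eval_translate (x y : σ → R) (p : MvPolynomial σ R) :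
    eval y (translate x p) = eval (x + y) p := by
  induction p using MvPolynomial.induction_on <;> simp_all [translate_apply, add_comm]

lemma totalDegree_aeval_le {τ : Type*} {g : σ → MvPolynomial τ R}
    (hg : ∀ i, (g i).totalDegree ≤ 1) (p : MvPolynomial σ R) :
    (aeval g p).totalDegree ≤ p.totalDegree := by
  rw [← mem_restrictTotalDegree, aeval_def, eval₂_eq]
  refine Submodule.sum_mem _ fun s hs => (mem_restrictTotalDegree _ _ _).2 ?_
  refine (totalDegree_mul _ _).trans ?_
  rw [algebraMap_eq, totalDegree_C, zero_add]
  refine (totalDegree_finsetProd _ _).trans <| (Finset.sum_le_sum fun i _ => ?_).trans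
    (le_totalDegree hs)
  calc (g i ^ s i).totalDegree ≤ s i * (g i).totalDegree := totalDegree_pow _ _
    _ ≤ s i := by simpa using Nat.mul_le_mul_left (s i) (hg i)

lemma totalDegree_translate_le (x : σ → R) (p : MvPolynomial σ R) :
    (translate x p).totalDegree ≤ p.totalDegree :=
  totalDegree_aeval_le (fun i => (totalDegree_add _ _).trans <| max_le (by simp) <| by
    simpa [X] using totalDegree_monomial_le (Finsupp.single i 1) (1 : R)) p

end Translate

section Homogeneous

variable {σ R : Type*} [CommSemiring R]

lemma IsHomogeneous.eval_smul {φ : MvPolynomial σ R} {m : ℕ} (hφ : φ.IsHomogeneous m)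
    (t : R) (v : σ → R) : eval (t • v) φ = t ^ m * eval v φ := by
  rw [eval_eq, eval_eq, Finset.mul_sum]
  refine Finset.sum_congr rfl fun d hd => ?_
  have hdeg : ∑ i ∈ d.support, d i = m := by
    simpa [Finsupp.weight_apply, Finsupp.sum] using hφ (mem_support_iff.1 hd)
  simp only [Pi.smul_apply, smul_eq_mul, mul_pow, Finset.prod_mul_distrib,
    Finset.prod_pow_eq_pow_sum, hdeg]
  ring

lemma IsHomogeneous.eval_zero_eq_zero {φ : MvPolynomial σ R} {m : ℕ} (hφ : φ.IsHomogeneous m)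
    (hm : m ≠ 0) : eval 0 φ = 0 := by
  simpa [zero_pow hm] using hφ.eval_smul 0 0

lemma eval_smul_eq_zero_of_eval_homogeneousComponent_eq_zero {φ : MvPolynomial σ R}
    {v : σ → R} (h0 : eval 0 φ = 0)
    (hv : ∀ j, 0 < j → eval v (homogeneousComponent j φ) = 0) (t : R) :
    eval (t • v) φ = 0 := by
  rw [← sum_homogeneousComponent φ, map_sum]
  refine Finset.sum_eq_zero fun j _ => ?_
  rw [(homogeneousComponent_isHomogeneous j φ).eval_smul]
  rcases j.eq_zero_or_pos with rfl | hj
  · simpa [homogeneousComponent_zero, eval_zero, constantCoeff_eq] using h0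
  · rw [hv j hj, mul_zero]

end Homogeneous

section Nullstellensatz

variable {σ k : Type*} [Field k]

lemma vanishingIdeal_singleton_eq_comap_translate (x a : σ → k) :
    vanishingIdeal k {a} = (vanishingIdeal k {x}).comap (translate (a - x)) := by
  ext f
  simp

variable [IsAlgClosed k] [Finite σ]

lemma height_vanishingIdeal_singleton (x : σ → k) :
    (vanishingIdeal k {x}).height = Nat.card σ := by
  have hdim : ringKrullDim (MvPolynomial σ k) = Nat.card σ := by simp
  have : FiniteRingKrullDim (MvPolynomial σ k) := finiteRingKrullDim_iff_ne_bot_and_top.2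
    ⟨by simp [hdim], hdim ▸ (WithBot.coe_lt_coe.2 (ENat.natCast_lt_top _)).ne⟩
  -- some maximal ideal has height `card σ`, and translations carry it to the ideal of `x`
  obtain ⟨M, hM, hMh⟩ := Ideal.exists_isMaximal_height (R := MvPolynomial σ k)
  obtain ⟨a, rfl⟩ := isMaximal_iff_eq_vanishingIdeal_singleton.1 hM
  rw [vanishingIdeal_singleton_eq_comap_translate x a, hdim] at hMh
  exact_mod_cast RingEquiv.height_comap (translate (a - x)).toRingEquiv _ ▸ hMh

theorem exists_ne_forall_eval_eq_zero (s : Finset (MvPolynomial σ k)) (hs : s.card < Nat.card σ)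
    {x : σ → k} (hx : ∀ f ∈ s, eval x f = 0) : ∃ y ≠ x, ∀ f ∈ s, eval y f = 0 := by
  have hle : Ideal.span s ≤ vanishingIdeal k {x} := Ideal.span_le.2 fun f hf =>
    (mem_vanishingIdeal_singleton_iff x f).2 (by simpa [coe_aeval_eq_eval] using hx f hf)
  obtain ⟨P, hPmin, hPx⟩ := Ideal.exists_minimalPrimes_le hle
  have hlt : P < vanishingIdeal k {x} := by
    refine lt_of_le_of_ne hPx fun hPeq => ?_
    have := Ideal.height_le_card_of_mem_minimalPrimes_span_finset hPmin
    rw [hPeq, height_vanishingIdeal_singleton] at this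
    norm_cast at this
    omega
  have hbig : ¬ zeroLocus k P ⊆ {x} := fun hsub => hlt.not_ge <|
    calc vanishingIdeal k {x} ≤ vanishingIdeal k (zeroLocus k P) := vanishingIdeal_anti_mono hsub
      _ = P := by rw [vanishingIdeal_zeroLocus_eq_radical, hPmin.1.1.radical]
  obtain ⟨y, hyP, hyx⟩ := Set.not_subset.1 hbig
  exact ⟨y, hyx, fun f hf => by
    simpa [coe_aeval_eq_eval] using mem_zeroLocus_iff.1 hyP f (hPmin.1.2 (Ideal.subset_span hf))⟩

end Nullstellensatz

end MvPolynomial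

theorem hypersurface_covered_by_lines_general [IsAlgClosed K] {n d : ℕ}
    (p : MvPolynomial (Fin n) K) (hpd : p.totalDegree = d) (hdn : d < n)
    {x : Fin n → K} (hx : eval x p = 0) :
    ∃ v : Fin n → K, v ≠ 0 ∧ ∀ t : K, eval (x + t • v) p = 0 := by
  classical
  set q := translate x p
  have hqd : q.totalDegree ≤ d := hpd ▸ totalDegree_translate_le x p
  obtain ⟨v, hv0, hv⟩ := exists_ne_forall_eval_eq_zero
    ((Finset.Icc 1 d).image fun j => homogeneousComponent j q)
    ((Finset.card_image_le.trans_eq (Nat.card_Icc 1 d)).trans_lt (by simpa using hdn))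
    (x := 0) (by
      simp only [Finset.mem_image, Finset.mem_Icc]
      rintro _ ⟨j, ⟨hj, -⟩, rfl⟩
      exact (homogeneousComponent_isHomogeneous j q).eval_zero_eq_zero (by omega))
  refine ⟨v, hv0, fun t => ?_⟩
  rw [← eval_translate]
  refine eval_smul_eq_zero_of_eval_homogeneousComponent_eq_zero (by rwa [eval_translate, add_zero])
    (fun j hj => ?_) t
  by_cases hjd : j ≤ d
  · exact hv _ (Finset.mem_image_of_mem _ (Finset.mem_Icc.2 ⟨hj, hjd⟩))
  · rw [homogeneousComponent_eq_zero _ _ (hqd.trans_lt (not_le.1 hjd)), map_zero]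

/-- A hypersurface in `K^n` of degree `d < n` over an algebraically closed field is
covered by affine lines: through every point of it passes a line contained in it.
In particular its degree of `K`-uniruledness is one. -/
theorem hypersurface_covered_by_lines [IsAlgClosed K] {n d : ℕ}
    (p : MvPolynomial (Fin n) K) (hp0 : p ≠ 0) (hpd : p.totalDegree = d) (hdn : d < n)
    {x : Fin n → K} (hx : eval x p = 0) :
    ∃ v : Fin n → K, v ≠ 0 ∧ ∀ t : K, eval (x + t • v) p = 0 :=
  hypersurface_covered_by_lines_general p hpd hdn hx
end

section
/- Let K ⊆ L be an extension of algebraically closed fields and f₁,…,f_r ∈ K[x₁,…,x_m]. Let KX and LX be the zero sets of f₁,…,f_r in K^m and L^m respectively. Then KX is Zariski-dense in LX; more precisely, any g ∈ L[x₁,…,x_m] vanishing identically on KX vanishes identically on LX. -/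
open MvPolynomial Set Filter

variable {K : Type} [Field K]

/-!
Expanding the coefficients of `g` in a `K`-basis `(b i)` of `L` writes `g = ∑ b i • g i` with
`g i ∈ K[x]`. Linear independence of the `b i` turns the vanishing of `g` on `K`-points of `V(I)`
into the vanishing of every `g i` there, so `g i ∈ √I` by the Nullstellensatz over `K`; and `√I`
vanishes on the `L`-points of `V(I)`, hence so does `g`.
-/

namespace MvPolynomial

section Coefficients

variable {σ R S : Type*} [CommSemiring R] [CommSemiring S]

theorem addMonoidAlgebraMap_monomial (φ : R →+ S) (α : σ →₀ ℕ) (c : R) :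
    AddMonoidAlgebra.map φ (monomial α c) = monomial α (φ c) := by
  classical
  ext β
  rw [coeff_addMonoidAlgebraMap, coeff_monomial, coeff_monomial]
  split_ifs <;> simp

variable [Algebra R S]

theorem eval_addMonoidAlgebraMap_linearMap (φ : S →ₗ[R] R) (g : MvPolynomial σ S)
    (x : σ → R) :
    eval x (AddMonoidAlgebra.map (φ : S →+ R) g) = φ (eval (algebraMap R S ∘ x) g) := by
  induction g using MvPolynomial.induction_on' with
  | monomial α c =>
    rw [addMonoidAlgebraMap_monomial, eval_monomial, eval_monomial]
    simp only [Function.comp_apply, ← map_pow, ← map_finsuppProd, mul_comm c,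
      ← Algebra.smul_def, map_smul, smul_eq_mul]
    exact mul_comm _ _
  | add p q hp hq =>
    rw [AddMonoidAlgebra.map_add, map_add, hp, hq, map_add, map_add]

theorem exists_finset_sum_smul_map_coord_eq {ι : Type*} (B : Module.Basis ι R S)
    (g : MvPolynomial σ S) :
    ∃ T : Finset ι,
      ∑ i ∈ T, B i • map (algebraMap R S) (AddMonoidAlgebra.map (B.coord i : S →+ R) g) = g := by
  classical
  set T := g.support.biUnion fun α => (B.repr (coeff α g)).support
  refine ⟨T, ?_⟩
  ext α
  have hsupp : (B.repr (coeff α g)).support ⊆ T := by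
    by_cases hα : α ∈ g.support
    · exact Finset.subset_biUnion_of_mem (fun α => (B.repr (coeff α g)).support) hα
    · simp [notMem_support_iff.1 hα]
  simp only [coeff_sum, coeff_smul, coeff_map, coeff_addMonoidAlgebraMap]
  conv_rhs => rw [← B.linearCombination_repr (coeff α g), Finsupp.linearCombination_apply,
    Finsupp.sum_of_support_subset _ hsupp _ fun _ _ => zero_smul R (B _)]
  refine Finset.sum_congr rfl fun i _ => ?_
  rw [smul_eq_mul, mul_comm, ← Algebra.smul_def]
  rfl

end Coefficients

variable {σ K L : Type*} [Field K] [IsAlgClosed K] [Field L] [Algebra K L] [Finite σ]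

theorem vanishingIdeal_zeroLocus_le_vanishingIdeal_zeroLocus (I : Ideal (MvPolynomial σ K)) :
    vanishingIdeal K (zeroLocus K I) ≤ vanishingIdeal K (zeroLocus L I) := by
  rw [vanishingIdeal_zeroLocus_eq_radical]
  exact radical_le_vanishingIdeal_zeroLocus I

theorem eval_eq_zero_of_mem_zeroLocus_of_forall_eval_algebraMap_eq_zero
    (I : Ideal (MvPolynomial σ K)) (g : MvPolynomial σ L)
    (hg : ∀ y ∈ zeroLocus K I, eval (algebraMap K L ∘ y) g = 0)
    {x : σ → L} (hx : x ∈ zeroLocus L I) : eval x g = 0 := by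
  set B := Module.Basis.ofVectorSpace K L
  have hslice (i) : AddMonoidAlgebra.map (B.coord i : L →+ K) g ∈
      vanishingIdeal K (zeroLocus L I) := by
    refine vanishingIdeal_zeroLocus_le_vanishingIdeal_zeroLocus I fun y hy => ?_
    rw [aeval_eq_eval, eval_addMonoidAlgebraMap_linearMap, hg y hy, map_zero]
  obtain ⟨T, hT⟩ := exists_finset_sum_smul_map_coord_eq B g
  rw [← hT, map_sum]
  refine Finset.sum_eq_zero fun i _ => ?_
  rw [smul_eval, eval_map, ← aeval_def, hslice i x hx, mul_zero]

end MvPolynomial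

theorem kpoints_dense_general {L : Type} [Field L] [Algebra K L] [IsAlgClosed K]
    {m r : ℕ} (f : Fin r → MvPolynomial (Fin m) K) (g : MvPolynomial (Fin m) L)
    (hg : ∀ x : Fin m → K, (∀ i, eval x (f i) = 0) →
      eval (fun j => algebraMap K L (x j)) g = 0) :
    ∀ x : Fin m → L, (∀ i, eval x (MvPolynomial.map (algebraMap K L) (f i)) = 0) →
      eval x g = 0 := by
  intro x hx
  refine eval_eq_zero_of_mem_zeroLocus_of_forall_eval_algebraMap_eq_zero
    (Ideal.span (Set.range f)) g (fun y hy => hg y fun i => ?_) ?_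
  · rw [zeroLocus_span] at hy
    simpa only [aeval_eq_eval] using hy (f i) ⟨i, rfl⟩
  · rw [zeroLocus_span]
    rintro _ ⟨i, rfl⟩
    rw [aeval_def, eval₂_eq_eval_map, hx i]

/-- Let `K ⊆ L` be an extension of algebraically closed fields and `f i` polynomials over
`K`. Then the `K`-points of their zero set are Zariski-dense in the `L`-points: any
polynomial `g` over `L` vanishing on `KX` vanishes on `LX`. -/
theorem kpoints_dense {L : Type} [Field L] [Algebra K L] [IsAlgClosed K] [IsAlgClosed L]
    {m r : ℕ} (f : Fin r → MvPolynomial (Fin m) K) (g : MvPolynomial (Fin m) L)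
    (hg : ∀ x : Fin m → K, (∀ i, eval x (f i) = 0) →
      eval (fun j => algebraMap K L (x j)) g = 0) :
    ∀ x : Fin m → L, (∀ i, eval x (MvPolynomial.map (algebraMap K L) (f i)) = 0) →
      eval x g = 0 :=
  kpoints_dense_general f g hg
end

section
/- Let X ⊂ K^m be an irreducible affine variety over an algebraically closed field K and d an integer. If there exists a Zariski-dense subset U ⊆ X such that through every point of U passes a parametric curve of degree at most d contained in X, then through every point of X passes a parametric curve of degree at most d contained in X. -/
open MvPolynomial Set Filter

variable {K : Type} [Field K]

/-!
Reparametrizing so that it passes through `x` at `t = 0`, a curve of degree at most `d` through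
`x` is `t ↦ x + ∑ₖ aₖ t^(k+1)` with `a ≠ 0`, and it lies in `X = V(S)` iff every coefficient of
`p (x + ∑ₖ aₖ t^(k+1))`, `p ∈ S`, vanishes. The coefficient of `t^r` is a polynomial in `(x, a)`
which is weighted homogeneous of degree `r` in `a` when `aₖ` has weight `k + 1`, so over each `x`
the admissible `a` form a cone in weighted projective space, and the set of points carrying a
curve is the projection of a closed subset of `K^m × ℙ(w)`. That projection is closed: by the
Nullstellensatz the cone over `x` is trivial iff some graded piece of positive degree lies in the
ideal, i.e. iff a maximal minor of a matrix of polynomials in `x` does not vanish at `x`.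
The closed set of points carrying a curve contains `U`, hence its Zariski closure, hence `X`.
-/

theorem span_range_eq_top_iff_exists_det_ne_zero {ι β : Type*} [Fintype β] [DecidableEq β]
    (v : ι → β → K) :
    Submodule.span K (range v) = ⊤ ↔ ∃ f : β → ι, (Matrix.of (v ∘ f)).det ≠ 0 := by
  constructor
  · intro hspan
    obtain ⟨κ, a, -, hspan_a, hli⟩ := exists_linearIndependent' K v
    let b : Module.Basis κ K (β → K) := .mk hli (by rw [hspan_a, hspan])
    let e : β ≃ κ := (Pi.basisFun K β).indexEquiv b
    refine ⟨a ∘ e, ?_⟩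
    rw [← isUnit_iff_ne_zero, ← Matrix.isUnit_iff_isUnit_det,
      ← Matrix.linearIndependent_rows_iff_isUnit]
    exact hli.comp e e.injective
  · rintro ⟨f, hdet⟩
    have hli : LinearIndependent K (v ∘ f) := Matrix.linearIndependent_rows_iff_isUnit.mpr
      ((Matrix.isUnit_iff_isUnit_det _).mpr (isUnit_iff_ne_zero.mpr hdet))
    rw [eq_top_iff,
      ← hli.span_eq_top_of_card_eq_finrank' (Module.finrank_fintype_fun_eq_card K).symm]
    exact Submodule.span_mono (range_comp_subset_range f v)

section GradedIdeal

attribute [local instance] MvPolynomial.weightedGradedAlgebra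

theorem forall_isWeightedHomogeneous_mem_span_iff {σ ι : Type*} [Finite σ] {w : σ → ℕ}
    (hw : ∀ i, w i ≠ 0) (g : ι → MvPolynomial σ K)
    (hg : ∀ i, ∃ n, IsWeightedHomogeneous w (g i) n) (W : ℕ) :
    (∀ f, IsWeightedHomogeneous w f W → f ∈ Ideal.span (range g)) ↔
      Submodule.span K (range fun ui : (σ →₀ ℕ) × ι =>
        fun e : {e | Finsupp.weight w e = W} => coeff e.1 (monomial ui.1 1 * g ui.2)) = ⊤ := by
  classical
  have := (Finsupp.finite_of_nat_weight_eq w hw W).to_subtype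
  set J := Ideal.span (range g)
  let c : MvPolynomial σ K →ₗ[K] ({e | Finsupp.weight w e = W} → K) :=
    LinearMap.pi fun e => lcoeff K e.1
  have hspan : Submodule.span K (range fun ui : (σ →₀ ℕ) × ι =>
      fun e : {e | Finsupp.weight w e = W} => coeff e.1 (monomial ui.1 1 * g ui.2)) =
      (J.restrictScalars K).map c := by
    rw [← Submodule.span_smul_of_span_eq_top (basisMonomials σ K).span_eq, coe_basisMonomials,
      range_smul_range, Submodule.map_span, ← range_comp]
    rfl
  have hJ : J.IsHomogeneous (weightedHomogeneousSubmodule K w) :=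
    Ideal.homogeneous_span _ _ (by rintro _ ⟨i, rfl⟩; exact hg i)
  rw [hspan]
  constructor
  · intro h
    rw [eq_top_iff, ← (Pi.basisFun K _).span_eq, Submodule.span_le]
    rintro _ ⟨e, rfl⟩
    refine ⟨monomial e.1 1, h _ (isWeightedHomogeneous_monomial _ _ _ e.2), ?_⟩
    ext e'
    simp only [Pi.basisFun_apply, Pi.single_apply, ← Subtype.coe_inj]
    exact (coeff_monomial (R := K) e'.1 e.1 1).trans (if_congr eq_comm rfl rfl)
  · intro htop f hf
    obtain ⟨q, hqJ, hcq⟩ : c f ∈ (J.restrictScalars K).map c := htop ▸ Submodule.mem_top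
    suffices f = weightedHomogeneousComponent w W q from
      this ▸ weightedHomogeneousComponent_mem_of_mem K w hJ hqJ W
    ext e
    rw [coeff_weightedHomogeneousComponent]
    split_ifs with he
    · exact (congrFun hcq ⟨e, he⟩).symm
    · exact hf.coeff_eq_zero e he

end GradedIdeal

theorem exists_X_pow_mem_of_zeroLocus_subset_zero [IsAlgClosed K] {σ : Type*} [Finite σ]
    {I : Ideal (MvPolynomial σ K)} (hI : zeroLocus K I ⊆ {0}) (i : σ) :
    ∃ n, (X i : MvPolynomial σ K) ^ n ∈ I := by
  have : (X i : MvPolynomial σ K) ∈ vanishingIdeal K (zeroLocus K I) := fun a ha => by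
    rw [hI ha, aeval_X, Pi.zero_apply]
  rwa [vanishingIdeal_zeroLocus_eq_radical] at this

theorem Finsupp.exists_le_apply_of_weight_gt {σ : Type*} [Fintype σ] {w : σ → ℕ} {L N : ℕ}
    (hw : ∀ i, w i ≤ L) {e : σ →₀ ℕ} (he : Fintype.card σ * N * L < weight w e) :
    ∃ i, N ≤ e i := by
  by_contra! hsmall
  refine he.not_ge ?_
  calc weight w e = ∑ i, e i * w i := by
        rw [weight_apply, sum_fintype _ _ (by simp)]; rfl
    _ ≤ ∑ _i : σ, N * L := Finset.sum_le_sum fun i _ => Nat.mul_le_mul (hsmall i).le (hw i)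
    _ = Fintype.card σ * N * L := by simp [mul_assoc]

theorem zeroLocus_subset_zero_iff_exists_weightedHomogeneous_mem [IsAlgClosed K] {σ : Type*}
    [Fintype σ] {w : σ → ℕ} {L : ℕ} (hL : 0 < L) (hw : ∀ i, w i ∣ L)
    (I : Ideal (MvPolynomial σ K)) :
    zeroLocus K I ⊆ {0} ↔
      ∃ W, 0 < W ∧ L ∣ W ∧ ∀ f, IsWeightedHomogeneous w f W → f ∈ I := by
  constructor
  · intro hI
    choose n hn using exists_X_pow_mem_of_zeroLocus_subset_zero hI
    set N := ∑ i, n i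
    have hN (i : σ) : (X i : MvPolynomial σ K) ^ N ∈ I :=
      I.pow_mem_of_pow_mem (hn i) (Finset.single_le_sum (by simp) (Finset.mem_univ i))
    refine ⟨L * (Fintype.card σ * N + 1), by positivity, dvd_mul_right _ _, ?_⟩
    intro f hf
    rw [f.as_sum]
    refine Ideal.sum_mem _ fun e he => ?_
    obtain ⟨i, hi⟩ := Finsupp.exists_le_apply_of_weight_gt (fun i => Nat.le_of_dvd hL (hw i))
      (N := N) (by rw [hf (mem_support_iff.mp he)]; nlinarith)
    have : monomial e (coeff e f) =
        monomial (e - Finsupp.single i N) (coeff e f) * X i ^ N := by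
      rw [X_pow_eq_monomial, monomial_mul, mul_one,
        tsub_add_cancel_of_le (Finsupp.single_le_iff.mpr hi)]
    rw [this]
    exact I.mul_mem_left _ (hN i)
  · rintro ⟨W, -, hLW, hW⟩ a ha
    funext i
    obtain ⟨q, hq⟩ := (hw i).trans hLW
    have hX : (X i : MvPolynomial σ K) ^ q ∈ I := hW _ <| by
      rw [X_pow_eq_monomial, hq, mul_comm]
      exact isWeightedHomogeneous_monomial _ _ _ (by rw [Finsupp.weight_single, smul_eq_mul])
    have := ha _ hX
    rw [map_pow, aeval_X] at this
    exact eq_zero_of_pow_eq_zero this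

theorem MvPolynomial.IsWeightedHomogeneous.map {σ R S M : Type*} [CommSemiring R]
    [CommSemiring S] [AddCommMonoid M] (f : R →+* S) {w : σ → M} {φ : MvPolynomial σ R}
    {n : M} (h : IsWeightedHomogeneous w φ n) : IsWeightedHomogeneous w (map f φ) n :=
  fun e he => h fun h0 => he (by rw [coeff_map, h0, map_zero])

theorem isAlgSet_setOf_exists_ne_zero_forall_eval_map_eq_zero [IsAlgClosed K] {m : ℕ}
    {σ ι : Type*} [Fintype σ] {w : σ → ℕ} (hw : ∀ i, w i ≠ 0)
    (G : ι → MvPolynomial σ (MvPolynomial (Fin m) K))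
    (hG : ∀ i, ∃ n, IsWeightedHomogeneous w (G i) n) :
    IsAlgSet {x : Fin m → K |
      ∃ a : σ → K, a ≠ 0 ∧ ∀ i, eval a (map (eval x) (G i)) = 0} := by
  classical
  set L := ∏ i, w i
  have hL : 0 < L := Finset.prod_pos fun i _ => Nat.pos_of_ne_zero (hw i)
  have hwL (i : σ) : w i ∣ L := Finset.dvd_prod_of_mem w (Finset.mem_univ i)
  have (W : ℕ) : Fintype {e | Finsupp.weight w e = W} :=
    (Finsupp.finite_of_nat_weight_eq w hw W).fintype
  -- At `x`, the rows `P W ui` are coordinate vectors of a spanning set of the degree-`W` part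
  -- of the ideal over `x`.
  let P (W : ℕ) (ui : (σ →₀ ℕ) × ι) (e : {e | Finsupp.weight w e = W}) :
      MvPolynomial (Fin m) K := coeff e.1 (monomial ui.1 1 * G ui.2)
  refine ⟨{q | ∃ W, 0 < W ∧ L ∣ W ∧ ∃ f, q = (Matrix.of (P W ∘ f)).det}, ?_⟩
  ext x
  set I := Ideal.span (range fun i => map (eval x) (G i))
  have hgraded (W : ℕ) : (∀ f, IsWeightedHomogeneous w f W → f ∈ I) ↔
      ∃ f, eval x (Matrix.of (P W ∘ f)).det ≠ 0 := by
    rw [forall_isWeightedHomogeneous_mem_span_iff hw _ fun i => (hG i).imp fun _ h => h.map _,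
      span_range_eq_top_iff_exists_det_ne_zero]
    refine exists_congr fun f => ?_
    rw [RingHom.map_det]
    congr! 2
    ext e e'
    rw [RingHom.mapMatrix_apply, Matrix.map_apply, Matrix.of_apply, Matrix.of_apply,
      Function.comp_apply, Function.comp_apply, ← coeff_map, map_mul, map_monomial,
      (eval x).map_one]
  have hzero : (∃ a : σ → K, a ≠ 0 ∧ ∀ i, eval a (map (eval x) (G i)) = 0) ↔
      ¬ zeroLocus K I ⊆ {0} := by
    simp [I, zeroLocus_span, subset_def, and_comm]
  refine hzero.trans ?_
  rw [zeroLocus_subset_zero_iff_exists_weightedHomogeneous_mem hL hwL]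
  simp only [hgraded, not_exists, not_and, not_not]
  constructor
  · rintro h q ⟨W, hW, hLW, f, rfl⟩
    exact h W hW hLW f
  · exact fun h W hW hLW f => h _ ⟨W, hW, hLW, f, rfl⟩

section ParamCurves

variable {m d : ℕ}

noncomputable def pointedCurve (x : Fin m → K) (a : Fin m × Fin d → K) (j : Fin m) :
    Polynomial K :=
  Polynomial.C (x j) + ∑ k : Fin d, Polynomial.monomial (k + 1) (a (j, k))

theorem pointedCurve_zero (x : Fin m → K) (j : Fin m) :
    pointedCurve x (0 : Fin m × Fin d → K) j = Polynomial.C (x j) := by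
  simp [pointedCurve]

theorem eval_zero_pointedCurve (x : Fin m → K) (a : Fin m × Fin d → K) (j : Fin m) :
    (pointedCurve x a j).eval 0 = x j := by
  simp [pointedCurve, Polynomial.eval_finsetSum]

theorem coeff_succ_pointedCurve (x : Fin m → K) (a : Fin m × Fin d → K) (j : Fin m)
    (k : Fin d) : (pointedCurve x a j).coeff (k + 1) = a (j, k) := by
  simp [pointedCurve, Polynomial.coeff_monomial, Fin.val_inj]

theorem natDegree_pointedCurve_le (x : Fin m → K) (a : Fin m × Fin d → K) (j : Fin m) :
    (pointedCurve x a j).natDegree ≤ d := by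
  refine (Polynomial.natDegree_add_le _ _).trans (max_le (by simp) ?_)
  exact Polynomial.natDegree_sum_le_of_forall_le _ _ fun k _ =>
    (Polynomial.natDegree_monomial_le _).trans k.2

theorem pointedCurve_coeff_eq_self {ψ : Fin m → Polynomial K}
    (hψ : ∀ j, (ψ j).natDegree ≤ d) :
    pointedCurve (fun j => (ψ j).coeff 0) (fun jk : Fin m × Fin d => (ψ jk.1).coeff (jk.2 + 1)) =
      ψ := by
  funext j
  conv_rhs => rw [(ψ j).as_sum_range' (d + 1) (Nat.lt_succ_of_le (hψ j)),
    Finset.sum_range_succ', ← Fin.sum_univ_eq_sum_range]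
  rw [pointedCurve, add_comm, Polynomial.monomial_zero_left]

theorem hasParamCurveThrough_iff_exists_pointedCurve (V : Set (Fin m → K)) (x : Fin m → K) :
    HasParamCurveThrough V d x ↔
      ∃ a : Fin m × Fin d → K, a ≠ 0 ∧
        ∀ t, (fun j => (pointedCurve x a j).eval t) ∈ V := by
  constructor
  · rintro ⟨φ, hφd, ⟨j₀, hj₀⟩, hφV, t₀, rfl⟩
    set ψ := fun j => (φ j).comp (Polynomial.X + Polynomial.C t₀)
    have hψd (j : Fin m) : (ψ j).natDegree = (φ j).natDegree := by
      simp [ψ, Polynomial.natDegree_comp]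
    have hψ : pointedCurve (fun j => (φ j).eval t₀)
        (fun jk : Fin m × Fin d => (ψ jk.1).coeff (jk.2 + 1)) = ψ := by
      convert pointedCurve_coeff_eq_self fun j => (hψd j).trans_le (hφd j) using 2 with j
      simp [ψ, Polynomial.coeff_zero_eq_eval_zero, Polynomial.eval_comp]
    refine ⟨fun jk => (ψ jk.1).coeff (jk.2 + 1), fun ha => ?_, fun t => ?_⟩
    · have := congrArg (fun ψ => (ψ j₀).natDegree) hψ
      simp only [ha, pointedCurve_zero, Polynomial.natDegree_C, hψd] at this
      omega
    · rw [hψ]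
      simpa [ψ, Polynomial.eval_comp] using hφV (t + t₀)
  · rintro ⟨a, ha, haV⟩
    obtain ⟨⟨j, k⟩, hjk⟩ := Function.ne_iff.mp ha
    refine ⟨pointedCurve x a, natDegree_pointedCurve_le x a, ⟨j, ?_⟩, haV, 0,
      funext (eval_zero_pointedCurve x a)⟩
    refine Nat.lt_of_lt_of_le k.succ_pos (Polynomial.le_natDegree_of_ne_zero ?_)
    rwa [Fin.val_succ, coeff_succ_pointedCurve]

variable (K d) in
noncomputable def universalCurve (j : Fin m) :
    Polynomial (MvPolynomial (Fin m × Fin d) (MvPolynomial (Fin m) K)) :=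
  Polynomial.C (C (X j)) + ∑ k : Fin d, Polynomial.monomial (k + 1) (X (j, k))

variable (d) in
noncomputable def curveCoeff (p : MvPolynomial (Fin m) K) (r : ℕ) :
    MvPolynomial (Fin m × Fin d) (MvPolynomial (Fin m) K) :=
  (aeval (universalCurve K d) p).coeff r

theorem map_universalCurve (x : Fin m → K) (a : Fin m × Fin d → K) (j : Fin m) :
    (universalCurve K d j).map ((eval a).comp (map (eval x))) = pointedCurve x a j := by
  simp [universalCurve, pointedCurve, Polynomial.map_sum]

theorem eval_map_curveCoeff (x : Fin m → K) (a : Fin m × Fin d → K)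
    (p : MvPolynomial (Fin m) K) (r : ℕ) :
    eval a (map (eval x) (curveCoeff d p r)) = (aeval (pointedCurve x a) p).coeff r := by
  let s : MvPolynomial (Fin m × Fin d) (MvPolynomial (Fin m) K) →ₐ[K] K :=
    (aeval a).comp (mapAlgHom (aeval x))
  calc eval a (map (eval x) (curveCoeff d p r))
      = (Polynomial.mapAlgHom s (aeval (universalCurve K d) p)).coeff r :=
        (Polynomial.coeff_mapAlgHom_apply s _ r).symm
    _ = (aeval (pointedCurve x a) p).coeff r := by
        rw [comp_aeval_apply]
        exact congrArg (fun ψ => (aeval ψ p).coeff r) (funext (map_universalCurve x a))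

theorem isWeightedHomogeneous_coeff_universalCurve (j : Fin m) (r : ℕ) :
    IsWeightedHomogeneous (fun jk : Fin m × Fin d => (jk.2 : ℕ) + 1)
      ((universalCurve K d j).coeff r) r := by
  rw [universalCurve, Polynomial.coeff_add, Polynomial.coeff_C, Polynomial.finsetSum_coeff]
  refine IsWeightedHomogeneous.add ?_ (IsWeightedHomogeneous.sum _ _ _ fun k _ => ?_)
  · split_ifs with hr
    · exact hr ▸ isWeightedHomogeneous_C _ _
    · exact isWeightedHomogeneous_zero _ _ _
  · rw [Polynomial.coeff_monomial]
    split_ifs with hr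
    · exact hr ▸ isWeightedHomogeneous_X _ _ (j, k)
    · exact isWeightedHomogeneous_zero _ _ _

theorem isWeightedHomogeneous_curveCoeff (p : MvPolynomial (Fin m) K) (r : ℕ) :
    IsWeightedHomogeneous (fun jk : Fin m × Fin d => (jk.2 : ℕ) + 1) (curveCoeff d p r) r := by
  induction p using MvPolynomial.induction_on generalizing r with
  | C c =>
    rw [curveCoeff, aeval_C, Polynomial.algebraMap_apply, Polynomial.coeff_C]
    split_ifs with hr
    · exact hr ▸ isWeightedHomogeneous_C _ _
    · exact isWeightedHomogeneous_zero _ _ _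
  | add p q hp hq =>
    rw [curveCoeff, map_add, Polynomial.coeff_add]
    exact (hp r).add (hq r)
  | mul_X p j hp =>
    rw [curveCoeff, map_mul, aeval_X, Polynomial.coeff_mul]
    refine IsWeightedHomogeneous.sum _ _ _ fun rr hrr => ?_
    rw [← Finset.HasAntidiagonal.mem_antidiagonal.mp hrr]
    exact (hp rr.1).mul (isWeightedHomogeneous_coeff_universalCurve j rr.2)

theorem hasParamCurveThrough_zeroSet_iff [Infinite K] (S : Set (MvPolynomial (Fin m) K))
    (x : Fin m → K) :
    HasParamCurveThrough {y | ∀ p ∈ S, eval y p = 0} d x ↔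
      ∃ a : Fin m × Fin d → K, a ≠ 0 ∧
        ∀ i : S × ℕ, eval a (map (eval x) (curveCoeff d i.1 i.2)) = 0 := by
  rw [hasParamCurveThrough_iff_exists_pointedCurve]
  refine exists_congr fun a => and_congr_right fun _ => ?_
  have heval (t : K) (p : MvPolynomial (Fin m) K) :
      eval (fun j => (pointedCurve x a j).eval t) p = (aeval (pointedCurve x a) p).eval t := by
    rw [← Polynomial.coe_aeval_eq_eval, comp_aeval_apply]
    rfl
  simp only [mem_ofPred_eq, heval, eval_map_curveCoeff, Prod.forall, Subtype.forall]
  constructor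
  · intro h p hp r
    rw [Polynomial.funext fun t => (h t p hp).trans (Polynomial.eval_zero).symm]
    exact Polynomial.coeff_zero r
  · intro h t p hp
    rw [Polynomial.ext fun r => (h p hp r).trans (Polynomial.coeff_zero r).symm,
      Polynomial.eval_zero]

end ParamCurves

theorem isAlgSet_setOf_hasParamCurveThrough [IsAlgClosed K] {m : ℕ} {V : Set (Fin m → K)}
    (hV : IsAlgSet V) (d : ℕ) : IsAlgSet {x | HasParamCurveThrough V d x} := by
  obtain ⟨S, rfl⟩ := hV
  simp_rw [hasParamCurveThrough_zeroSet_iff]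
  exact isAlgSet_setOf_exists_ne_zero_forall_eval_map_eq_zero (fun _ => Nat.succ_ne_zero _) _
    fun i => ⟨i.2, isWeightedHomogeneous_curveCoeff _ _⟩

theorem dense_curves_cover_all_general [IsAlgClosed K] {m d : ℕ}
    {X : Set (Fin m → K)} (hX : IrredAlgSet X) {U : Set (Fin m → K)}
    (hdense : X ⊆ zclosure U)
    (hcur : ∀ x ∈ U, HasParamCurveThrough X d x) :
    ∀ x ∈ X, HasParamCurveThrough X d x :=
  fun _ hx => mem_sInter.mp (hdense hx) _ ⟨isAlgSet_setOf_hasParamCurveThrough hX.1 d, hcur⟩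

/-- If a Zariski-dense subset of an irreducible affine variety `X` is covered by
parametric curves of degree at most `d` contained in `X`, then so is all of `X`. -/
theorem dense_curves_cover_all [IsAlgClosed K] {m d : ℕ}
    {X : Set (Fin m → K)} (hX : IrredAlgSet X) {U : Set (Fin m → K)}
    (hUX : U ⊆ X) (hdense : X ⊆ zclosure U)
    (hcur : ∀ x ∈ U, HasParamCurveThrough X d x) :
    ∀ x ∈ X, HasParamCurveThrough X d x :=
  dense_curves_cover_all_general hX hdense hcur
end
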